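/- arXiv:1403.3314 — 7 statements merged into one kernel-verified Lean document; each statement's English description precedes it below -/
import Mathlib

section
/- The set D' = {(x₁,x₂,x₃) ∈ ℝ³ : x₂ > 0 and x₁ > x₃²/2 − log x₂} contains no complete affine line: for every point p ∈ ℝ³ and every nonzero vector v ∈ ℝ³ there exists t ∈ ℝ such that p + t·v ∉ D'. -/
/-!
A line on which `x₂` is not constant leaves the half-plane `x₂ > 0`. On a line with constant
`x₂ = p₂`, membership in `D'` says that an affine function of `t` stays strictly above
`(p₃ + t v₃)² / 2 - log p₂`; since `(v₁, v₃) ≠ 0` this fails somewhere, because a parabola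
eventually dominates every affine function, and a non-constant affine function is not bounded below.
-/

lemma exists_affine_le_sq_half (β γ : ℝ) : ∃ s : ℝ, β * s + γ ≤ s ^ 2 / 2 := by
  refine ⟨2 * (|β| + |γ| + 1), ?_⟩
  nlinarith [le_abs_self β, le_abs_self γ, abs_nonneg β, abs_nonneg γ]

lemma exists_affine_le_sq_half_affine (a b c d : ℝ) (hbd : b ≠ 0 ∨ d ≠ 0) :
    ∃ t : ℝ, a + t * b ≤ (c + t * d) ^ 2 / 2 := by
  by_cases hd : d = 0
  · have hb : b ≠ 0 := hbd.resolve_right (not_not.mpr hd)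
    refine ⟨(c ^ 2 / 2 - a) / b, ?_⟩
    rw [hd, div_mul_cancel₀ _ hb]
    simp
  · obtain ⟨s, hs⟩ := exists_affine_le_sq_half (b / d) (a - b / d * c)
    refine ⟨(s - c) / d, ?_⟩
    have hline : c + (s - c) / d * d = s := by field_simp; ring
    rw [hline]
    calc a + (s - c) / d * b = b / d * s + (a - b / d * c) := by ring
      _ ≤ s ^ 2 / 2 := hs

/-- `D'` contains no complete affine line: for every `p` and nonzero `v` there is `t`
with `p + t • v ∉ D'`. -/
theorem stmt_2 (p v : ℝ × ℝ × ℝ) (hv : v ≠ 0) :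
    ∃ t : ℝ,
      p + t • v ∉ {x : ℝ × ℝ × ℝ | 0 < x.2.1 ∧ x.2.2 ^ 2 / 2 - Real.log x.2.1 < x.1} := by
  obtain ⟨p₁, p₂, p₃⟩ := p
  obtain ⟨v₁, v₂, v₃⟩ := v
  simp only [Prod.mk_add_mk, Prod.smul_mk, smul_eq_mul, Set.mem_ofPred_eq, not_and, not_lt]
  by_cases hv₂ : v₂ = 0
  · have hv₁₃ : v₁ ≠ 0 ∨ v₃ ≠ 0 := by
      by_contra! h
      exact hv (by simp [h.1, h.2, hv₂])
    obtain ⟨t, ht⟩ := exists_affine_le_sq_half_affine (p₁ + Real.log p₂) v₁ p₃ v₃ hv₁₃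
    refine ⟨t, fun _ => ?_⟩
    rw [hv₂, mul_zero, add_zero]
    linarith
  · refine ⟨-p₂ / v₂, fun h => absurd h ?_⟩
    rw [div_mul_cancel₀ _ hv₂]
    simp
end

section
/- For all real numbers a and b, the affine transformation of ℝ³ given by (x₁,x₂,x₃) ↦ (x₁ + b·x₃ + b²/2 − a, eᵃ·x₂, x₃ + b) maps the set D' = {(x₁,x₂,x₃) ∈ ℝ³ : x₂ > 0 and x₁ > x₃²/2 − log x₂} bijectively onto itself. -/
/-!
The maps `ψ a b` form an action of the additive group `ℝ²`, so `ψ (-a) (-b)` inverts `ψ a b`.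
Writing `F(x₂, x₃) = x₃²/2 - log x₂`, one has `F(eᵃ x₂, x₃ + b) = F(x₂, x₃) + b x₃ + b²/2 - a`,
which is exactly the shift of the first coordinate; hence every `ψ a b` preserves the height
`x₁ - F(x₂, x₃)` above the graph and maps the epigraph `D'` into itself.
-/

open Real

noncomputable section

namespace LieEpigraph

def ψ (a b : ℝ) (x : ℝ × ℝ × ℝ) : ℝ × ℝ × ℝ :=
  (x.1 + b * x.2.2 + b ^ 2 / 2 - a, exp a * x.2.1, x.2.2 + b)

def F (x₂ x₃ : ℝ) : ℝ := x₃ ^ 2 / 2 - log x₂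

def D : Set (ℝ × ℝ × ℝ) := {x | 0 < x.2.1 ∧ F x.2.1 x.2.2 < x.1}

theorem ψ_ψ (a b a' b' : ℝ) (x : ℝ × ℝ × ℝ) : ψ a b (ψ a' b' x) = ψ (a + a') (b + b') x := by
  simp only [ψ, Prod.mk.injEq, exp_add]
  refine ⟨by ring, by ring, by ring⟩

theorem ψ_zero (x : ℝ × ℝ × ℝ) : ψ 0 0 x = x := by
  simp [ψ]

theorem ψ_neg_ψ (a b : ℝ) (x : ℝ × ℝ × ℝ) : ψ (-a) (-b) (ψ a b x) = x := by
  rw [ψ_ψ, neg_add_cancel, neg_add_cancel, ψ_zero]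

theorem F_exp_mul_add {x₂ : ℝ} (hx₂ : 0 < x₂) (a b x₃ : ℝ) :
    F (exp a * x₂) (x₃ + b) = F x₂ x₃ + b * x₃ + b ^ 2 / 2 - a := by
  rw [F, F, log_mul (exp_ne_zero a) hx₂.ne', log_exp]
  ring

theorem mapsTo_ψ (a b : ℝ) : Set.MapsTo (ψ a b) D D := by
  rintro ⟨x₁, x₂, x₃⟩ ⟨hx₂, hx₁⟩
  refine ⟨mul_pos (exp_pos a) hx₂, ?_⟩
  simp only [ψ, F_exp_mul_add hx₂]
  linarith

theorem bijOn_ψ (a b : ℝ) : Set.BijOn (ψ a b) D D :=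
  Set.InvOn.bijOn ⟨fun x _ ↦ ψ_neg_ψ a b x, fun x _ ↦ by simpa using ψ_neg_ψ (-a) (-b) x⟩
    (mapsTo_ψ a b) (mapsTo_ψ (-a) (-b))

end LieEpigraph

end

/-- For all `a b : ℝ`, the affine map
`(x₁,x₂,x₃) ↦ (x₁ + b·x₃ + b²/2 − a, eᵃ·x₂, x₃ + b)` maps `D'` bijectively onto itself. -/
theorem stmt_4 (a b : ℝ) :
    Set.BijOn
      (fun x : ℝ × ℝ × ℝ =>
        ((x.1 + b * x.2.2 + b ^ 2 / 2 - a, Real.exp a * x.2.1, x.2.2 + b) : ℝ × ℝ × ℝ))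
      {x : ℝ × ℝ × ℝ | 0 < x.2.1 ∧ x.2.2 ^ 2 / 2 - Real.log x.2.1 < x.1}
      {x : ℝ × ℝ × ℝ | 0 < x.2.1 ∧ x.2.2 ^ 2 / 2 - Real.log x.2.1 < x.1} :=
  LieEpigraph.bijOn_ψ a b
end

section
/- For all real numbers a and b, the matrix exponential of the 4×4 real matrix X'(a,b) with rows (0,0,b,−a), (0,a,0,0), (0,0,0,b), (0,0,0,0) equals the 4×4 matrix with rows (1,0,b,b²/2−a), (0,eᵃ,0,0), (0,0,1,b), (0,0,0,1). -/
/-!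
`X'(a,b)` is the sum of the diagonal matrix `diag(0,a,0,0)` and a commuting matrix `N` with
`N ^ 3 = 0`, so its exponential is `diag(1, eᵃ, 1, 1) * (1 + N + N ^ 2 / 2)`.
-/

open Matrix NormedSpace Finset
open scoped Nat

theorem NormedSpace.exp_eq_sum_range_of_pow_eq_zero (𝕂 : Type*) {𝔸 : Type*} [Field 𝕂]
    [CharZero 𝕂] [Ring 𝔸] [Algebra 𝕂 𝔸] [TopologicalSpace 𝔸] [IsTopologicalRing 𝔸]
    {x : 𝔸} {n : ℕ} (hx : x ^ n = 0) :
    exp x = ∑ k ∈ range n, (k !⁻¹ : 𝕂) • x ^ k := by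
  rw [exp_eq_tsum 𝕂]
  refine tsum_eq_sum fun k hk => ?_
  rw [pow_eq_zero_of_le (not_lt.1 (mem_range.not.1 hk)) hx, smul_zero]

theorem NormedSpace.exp_eq_of_pow_three_eq_zero (𝕂 : Type*) {𝔸 : Type*} [Field 𝕂]
    [CharZero 𝕂] [Ring 𝔸] [Algebra 𝕂 𝔸] [TopologicalSpace 𝔸] [IsTopologicalRing 𝔸]
    {x : 𝔸} (hx : x ^ 3 = 0) :
    exp x = 1 + x + (2⁻¹ : 𝕂) • x ^ 2 := by
  rw [exp_eq_sum_range_of_pow_eq_zero 𝕂 hx]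
  simp [sum_range_succ]

section

variable (a b : ℝ)

lemma nilpotentPart_sq :
    (!![0, 0, b, -a; 0, 0, 0, 0; 0, 0, 0, b; 0, 0, 0, 0] : Matrix (Fin 4) (Fin 4) ℝ) ^ 2 =
      !![0, 0, 0, b ^ 2; 0, 0, 0, 0; 0, 0, 0, 0; 0, 0, 0, 0] := by
  rw [sq]
  ext i j
  fin_cases i <;> fin_cases j <;> simp [mul_apply, Fin.sum_univ_four, sq]

lemma nilpotentPart_pow_three :
    (!![0, 0, b, -a; 0, 0, 0, 0; 0, 0, 0, b; 0, 0, 0, 0] : Matrix (Fin 4) (Fin 4) ℝ) ^ 3 = 0 := by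
  rw [pow_succ, nilpotentPart_sq]
  ext i j
  fin_cases i <;> fin_cases j <;> simp [mul_apply, Fin.sum_univ_four]

lemma exp_nilpotentPart :
    exp (!![0, 0, b, -a; 0, 0, 0, 0; 0, 0, 0, b; 0, 0, 0, 0] : Matrix (Fin 4) (Fin 4) ℝ) =
      !![1, 0, b, b ^ 2 / 2 - a; 0, 1, 0, 0; 0, 0, 1, b; 0, 0, 0, 1] := by
  rw [exp_eq_of_pow_three_eq_zero ℝ (nilpotentPart_pow_three a b), nilpotentPart_sq]
  ext i j
  fin_cases i <;> fin_cases j <;> simp [one_apply, div_eq_inv_mul, sub_eq_neg_add]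

lemma commute_diagonal_nilpotentPart :
    Commute (diagonal ![0, a, 0, 0])
      (!![0, 0, b, -a; 0, 0, 0, 0; 0, 0, 0, b; 0, 0, 0, 0] : Matrix (Fin 4) (Fin 4) ℝ) := by
  ext i j
  fin_cases i <;> fin_cases j <;> simp [mul_apply, diagonal]

end

/-- The matrix exponential of `X'(a,b)` equals the displayed element of `L'`. -/
theorem stmt_5 (a b : ℝ) :
    NormedSpace.exp
      (!![0, 0, b, -a;
          0, a, 0, 0;
          0, 0, 0, b;
          0, 0, 0, 0] : Matrix (Fin 4) (Fin 4) ℝ) =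
    !![1, 0, b, b ^ 2 / 2 - a;
       0, Real.exp a, 0, 0;
       0, 0, 1, b;
       0, 0, 0, 1] := by
  have hsplit : (!![0, 0, b, -a; 0, a, 0, 0; 0, 0, 0, b; 0, 0, 0, 0] : Matrix (Fin 4) (Fin 4) ℝ) =
      diagonal ![0, a, 0, 0] + !![0, 0, b, -a; 0, 0, 0, 0; 0, 0, 0, b; 0, 0, 0, 0] := by
    ext i j
    fin_cases i <;> fin_cases j <;> simp
  rw [hsplit, Matrix.exp_add_of_commute _ _ (commute_diagonal_nilpotentPart a b),
    exp_diagonal, exp_nilpotentPart, Pi.exp_def, ← Real.exp_eq_exp_ℝ]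
  ext i j
  fin_cases i <;> fin_cases j <;> simp [mul_apply, Fin.sum_univ_four]
end

section
/- For every real t ≠ 0 and all real numbers r and s, the matrix exponential of the 4×4 real matrix with rows (0,r,s,0), (0,t·r,0,r), (0,0,0,s), (0,0,0,0) equals the 4×4 matrix with rows (1, (e^{t·r}−1)/t, s, (e^{t·r}−t·r−1)/t² + s²/2), (0, e^{t·r}, 0, (e^{t·r}−1)/t), (0,0,1,s), (0,0,0,1). -/
/-!
Write the matrix as `(t * r) • p + m`, where `p` is idempotent, `m ^ 3 = 0` and `p * m = m * p = 0`.
On an idempotent the exponential series collapses to `exp (c • p) = 1 + (eᶜ - 1) • p`, while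
`exp m = 1 + m + m ^ 2 / 2` is a finite sum; since the two parts commute, `exp` of the matrix is
the product of these, whose entries are the claimed ones.
-/

open NormedSpace
open scoped Nat

theorem NormedSpace.exp_eq_sum_of_pow_eq_zero {𝕂 𝔸 : Type*} [Field 𝕂] [CharZero 𝕂] [Ring 𝔸]
    [Algebra 𝕂 𝔸] [TopologicalSpace 𝔸] [IsTopologicalRing 𝔸] {x : 𝔸} {n : ℕ} (hx : x ^ n = 0) :
    exp x = ∑ k ∈ Finset.range n, (k ! : 𝕂)⁻¹ • x ^ k := by
  rw [exp_eq_tsum 𝕂]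
  refine tsum_eq_sum fun k hk => ?_
  rw [pow_eq_zero_of_le (by simpa using hk) hx, smul_zero]

theorem IsIdempotentElem.exp_smul {𝔸 : Type*} [Ring 𝔸] [Algebra ℝ 𝔸] [TopologicalSpace 𝔸]
    [IsTopologicalRing 𝔸] [ContinuousSMul ℝ 𝔸] [T2Space 𝔸] {p : 𝔸} (hp : IsIdempotentElem p)
    (c : ℝ) : exp (c • p) = 1 + (Real.exp c - 1) • p := by
  have hterm : ∀ k : ℕ, (k ! : ℝ)⁻¹ • (c • p) ^ k
      = ((k ! : ℝ)⁻¹ • c ^ k) • p + Pi.single (M := fun _ => 𝔸) 0 (1 - p) k := by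
    rintro (_ | k)
    · simp
    · simp [smul_pow, hp.pow_succ_eq, smul_smul]
  have hscalar : HasSum (fun k : ℕ => (k ! : ℝ)⁻¹ • c ^ k) (Real.exp c) := by
    rw [Real.exp_eq_exp_ℝ]
    exact exp_series_hasSum_exp' c
  have hsum := (hscalar.smul_const p).add (hasSum_pi_single 0 (1 - p))
  simp only [exp_eq_tsum ℝ]
  rw [funext hterm, hsum.tsum_eq, sub_smul, one_smul]
  abel

/-- For `t ≠ 0`, the matrix exponential of the element of `𝔏_t` with parameters `(r,s)`
equals the displayed element of `L_t`. -/
theorem stmt_6 (t : ℝ) (ht : t ≠ 0) (r s : ℝ) :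
    NormedSpace.exp
      (!![0, r, s, 0;
          0, t * r, 0, r;
          0, 0, 0, s;
          0, 0, 0, 0] : Matrix (Fin 4) (Fin 4) ℝ) =
    !![1, (Real.exp (t * r) - 1) / t, s, (Real.exp (t * r) - t * r - 1) / t ^ 2 + s ^ 2 / 2;
       0, Real.exp (t * r), 0, (Real.exp (t * r) - 1) / t;
       0, 0, 1, s;
       0, 0, 0, 1] := by
  set p : Matrix (Fin 4) (Fin 4) ℝ :=
    !![0, 1 / t, 0, 1 / t ^ 2; 0, 1, 0, 1 / t; 0, 0, 0, 0; 0, 0, 0, 0]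
  set m : Matrix (Fin 4) (Fin 4) ℝ :=
    !![0, 0, s, -r / t; 0, 0, 0, 0; 0, 0, 0, s; 0, 0, 0, 0]
  have hsplit : (!![0, r, s, 0; 0, t * r, 0, r; 0, 0, 0, s; 0, 0, 0, 0] : Matrix (Fin 4) (Fin 4) ℝ)
      = (t * r) • p + m := by
    ext i j; fin_cases i <;> fin_cases j <;> simp [p, m]
    all_goals field_simp
    ring
  have hp : IsIdempotentElem p := by
    ext i j; fin_cases i <;> fin_cases j <;> simp [p, Matrix.mul_apply, Fin.sum_univ_four]
    field_simp
  have hpm : p * m = 0 := by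
    ext i j; fin_cases i <;> fin_cases j <;> simp [p, m, Matrix.mul_apply, Fin.sum_univ_four]
  have hmp : m * p = 0 := by
    ext i j; fin_cases i <;> fin_cases j <;> simp [p, m, Matrix.mul_apply, Fin.sum_univ_four]
  have hm : m ^ 3 = 0 := by
    ext i j; fin_cases i <;> fin_cases j <;> simp [m, pow_succ, Matrix.mul_apply, Fin.sum_univ_four]
  have hcomm : Commute ((t * r) • p) m := Commute.smul_left (hpm.trans hmp.symm) _
  rw [hsplit, Matrix.exp_add_of_commute _ _ hcomm, hp.exp_smul,
    exp_eq_sum_of_pow_eq_zero (𝕂 := ℝ) hm]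
  ext i j; fin_cases i <;> fin_cases j <;>
    simp [p, m, pow_succ, Matrix.mul_apply, Fin.sum_univ_four, Finset.sum_range_succ] <;>
    field_simp
  ring
end

section
/- Let (a,b) ∈ ℝ² with (a,b) ≠ (0,0) and let X'(a,b) be the 4×4 real matrix with rows (0,0,b,−a), (0,a,0,0), (0,0,0,b), (0,0,0,0). Then the minimal polynomial of X'(a,b) over ℝ is X²·(X − a) if a·b = 0, and is X³·(X − a) if a·b ≠ 0. -/
/-!
On `e₁` the matrix `X'(a,b)` acts by `a`, and on `span {e₀, e₂, e₃}` it is nilpotent with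
`e₃ ↦ b e₂ - a e₀ ↦ b² e₀ ↦ 0`. Hence `q(X'(a,b))` only depends on `q(a)` and on the first three
coefficients of `q`, and reading off its entries shows that the annihilating polynomials are exactly
the multiples of `X³(X - a)`, `X³` or `X²(X - a)` in the cases `ab ≠ 0`, `a = 0`, `b = 0`.
-/

open Polynomial

theorem minpoly_eq_of_forall_aeval_eq_zero_dvd {K A : Type*} [Field K] [Ring A] [Algebra K A]
    {x : A} {p : K[X]} (hp : p.Monic) (hx : aeval x p = 0)
    (hdvd : ∀ q : K[X], aeval x q = 0 → p ∣ q) : minpoly K x = p :=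
  eq_of_monic_of_associated (minpoly.monic ⟨p, hp, hx⟩) hp <|
    associated_of_dvd_dvd (minpoly.dvd K x hx) (hdvd _ (minpoly.aeval K x))

theorem X_pow_mul_X_sub_C_dvd {K : Type*} [Field K] {a : K} (ha : a ≠ 0) {n : ℕ} {q : K[X]}
    (hcoeff : ∀ d < n, q.coeff d = 0) (hroot : q.IsRoot a) : X ^ n * (X - C a) ∣ q := by
  have hcop : IsCoprime (X ^ n) (X - C a) := by
    simpa using (isCoprime_X_sub_C_of_isUnit_sub (sub_ne_zero.2 ha.symm).isUnit).pow_left (m := n)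
  exact hcop.mul_dvd (X_pow_dvd_iff.2 hcoeff) (dvd_iff_isRoot.2 hroot)

section

variable {R : Type*} [CommRing R]

/-- The element `X'(a,b)` of `𝔏'`. -/
def xPrime (a b : R) : Matrix (Fin 4) (Fin 4) R :=
  !![0, 0, b, -a; 0, a, 0, 0; 0, 0, 0, b; 0, 0, 0, 0]

theorem aeval_xPrime (a b : R) (q : R[X]) :
    aeval (xPrime a b) q =
      !![q.coeff 0, 0, q.coeff 1 * b, q.coeff 2 * b ^ 2 - q.coeff 1 * a;
         0, q.eval a, 0, 0;
         0, 0, q.coeff 0, q.coeff 1 * b;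
         0, 0, 0, q.coeff 0] := by
  induction q using Polynomial.induction_on with
  | C c => ext i j; fin_cases i <;> fin_cases j <;> simp [coeff_C, Matrix.algebraMap_matrix_apply]
  | add p q hp hq => rw [map_add, hp, hq]; ext i j; fin_cases i <;> fin_cases j <;> simp <;> ring
  | monomial n c ih =>
    rw [pow_succ, ← mul_assoc, map_mul, ih, aeval_X, xPrime]
    generalize C c * X ^ n = p
    ext i j
    fin_cases i <;> fin_cases j <;> simp [coeff_mul_X, Matrix.mul_apply, Fin.sum_univ_four]
    ring

theorem aeval_xPrime_eq_zero_iff (a b : R) (q : R[X]) :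
    aeval (xPrime a b) q = 0 ↔ q.coeff 0 = 0 ∧ q.coeff 1 * b = 0 ∧
      q.coeff 2 * b ^ 2 - q.coeff 1 * a = 0 ∧ q.IsRoot a := by
  rw [aeval_xPrime, ← Matrix.ext_iff]
  simp only [Matrix.of_apply, Matrix.cons_val', Matrix.cons_val_fin_one, Matrix.zero_apply,
    Fin.forall_fin_succ, Fin.isValue, Matrix.cons_val_zero, Matrix.cons_val_succ, forall_const,
    true_and, and_self, and_true, and_self_left, IsRoot.def]
  tauto

end

section

variable {K : Type*} [Field K] {a b : K}

theorem minpoly_xPrime_of_ne_zero (ha : a ≠ 0) (hb : b ≠ 0) :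
    minpoly K (xPrime a b) = X ^ 3 * (X - C a) := by
  refine minpoly_eq_of_forall_aeval_eq_zero_dvd ((monic_X_pow 3).mul (monic_X_sub_C a)) ?_ ?_
  · rw [aeval_xPrime_eq_zero_iff]
    simp [coeff_X_pow_mul']
  · intro q hq
    obtain ⟨h0, h1, h2, hroot⟩ := (aeval_xPrime_eq_zero_iff a b q).1 hq
    have hc1 : q.coeff 1 = 0 := by simpa [hb] using h1
    have hc2 : q.coeff 2 = 0 := by simpa [hb, hc1] using h2
    refine X_pow_mul_X_sub_C_dvd ha (fun d hd => ?_) hroot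
    interval_cases d <;> assumption

theorem minpoly_xPrime_zero_left (hb : b ≠ 0) : minpoly K (xPrime 0 b) = X ^ 3 := by
  refine minpoly_eq_of_forall_aeval_eq_zero_dvd (monic_X_pow 3) ?_ ?_
  · rw [aeval_xPrime_eq_zero_iff]
    simp [coeff_X_pow]
  · intro q hq
    obtain ⟨h0, h1, h2, -⟩ := (aeval_xPrime_eq_zero_iff 0 b q).1 hq
    have hc1 : q.coeff 1 = 0 := by simpa [hb] using h1
    have hc2 : q.coeff 2 = 0 := by simpa [hb] using h2
    refine X_pow_dvd_iff.2 fun d hd => ?_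
    interval_cases d <;> assumption

theorem minpoly_xPrime_zero_right (ha : a ≠ 0) :
    minpoly K (xPrime a 0) = X ^ 2 * (X - C a) := by
  refine minpoly_eq_of_forall_aeval_eq_zero_dvd ((monic_X_pow 2).mul (monic_X_sub_C a)) ?_ ?_
  · rw [aeval_xPrime_eq_zero_iff]
    simp [coeff_X_pow_mul']
  · intro q hq
    obtain ⟨h0, -, h2, hroot⟩ := (aeval_xPrime_eq_zero_iff a 0 q).1 hq
    have hc1 : q.coeff 1 = 0 := by simpa [ha] using h2
    refine X_pow_mul_X_sub_C_dvd ha (fun d hd => ?_) hroot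
    interval_cases d <;> assumption

end

/-- The minimal polynomial of `X'(a,b) ∈ 𝔏'` is `X²(X − a)` if `ab = 0` and
`X³(X − a)` otherwise, for `(a,b) ≠ (0,0)`. -/
theorem stmt_10 (a b : ℝ) (hab : (a, b) ≠ (0, 0)) :
    (a * b = 0 →
      minpoly ℝ (!![0, 0, b, -a;
                    0, a, 0, 0;
                    0, 0, 0, b;
                    0, 0, 0, 0] : Matrix (Fin 4) (Fin 4) ℝ) =
        X ^ 2 * (X - C a)) ∧
    (a * b ≠ 0 →
      minpoly ℝ (!![0, 0, b, -a;
                    0, a, 0, 0;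
                    0, 0, 0, b;
                    0, 0, 0, 0] : Matrix (Fin 4) (Fin 4) ℝ) =
        X ^ 3 * (X - C a)) := by
  refine ⟨fun hab0 => ?_, fun hab0 => minpoly_xPrime_of_ne_zero (left_ne_zero_of_mul hab0)
    (right_ne_zero_of_mul hab0)⟩
  rcases mul_eq_zero.1 hab0 with rfl | rfl
  · rw [C_0, sub_zero, ← pow_succ]
    exact minpoly_xPrime_zero_left (by simpa using hab)
  · exact minpoly_xPrime_zero_right (by simpa using hab)
end

section
/- Let 𝔉 be a 2-dimensional linear subspace of the 4×4 real matrices which is abelian (x·y = y·x for all x,y ∈ 𝔉). Suppose there is a nonzero linear functional f : 𝔉 → ℝ and a function n : 𝔉∖{0} → {2,3} such that for every nonzero x ∈ 𝔉 the minimal polynomial of x over ℝ equals X^{n(x)}·(X − f(x)), such that n(x) = 2 whenever f(x) = 0, and such that n(x) = 3 for some x. Then there exists an invertible 4×4 real matrix P such that P·𝔉·P⁻¹ equals either 𝔏' or 𝔏'₋, where 𝔏' is the set of matrices with rows (0,0,b,−a), (0,a,0,0), (0,0,0,b), (0,0,0,0) for (a,b) ∈ ℝ², and 𝔏'₋ is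 the set of matrices with rows (0,0,b,a), (0,a,0,0), (0,0,0,b), (0,0,0,0) for (a,b) ∈ ℝ². -/
open Polynomial

/-- The abelian Lie algebra `𝔏'`. -/
def LieAlgL' : Set (Matrix (Fin 4) (Fin 4) ℝ) :=
  {M | ∃ a b : ℝ,
    M = !![0, 0, b, -a;
           0, a, 0, 0;
           0, 0, 0, b;
           0, 0, 0, 0]}

/-- The abelian Lie algebra `𝔏'₋`. -/
def LieAlgL'neg : Set (Matrix (Fin 4) (Fin 4) ℝ) :=
  {M | ∃ a b : ℝ,
    M = !![0, 0, b, a;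
           0, a, 0, 0;
           0, 0, 0, b;
           0, 0, 0, 0]}

/-!
Take `y ∈ 𝔉` with `n y = 3`, so that `μ = f y ≠ 0`, and `z ≠ 0` in `ker f`; then `y, z` span `𝔉`,
`minpoly y = X³(X - μ)` and `minpoly z = X³`. The `μ`-eigenspace of `y` is a line `ℝ v`, because
`y` has a Jordan chain of length 3 for the eigenvalue `0`; the nilpotent `z` preserves it, so
`z v = 0`. Hence `z²` does not vanish on `ker y³`, which is thus a single Jordan chain
`w, z w, z² w` of `z`, and `y`, commuting with `z` and nilpotent on `ker y³`, acts there as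
`c₀ z² + c₁ z`. In the basis `(z² w, v, z w, w)` the algebra `𝔉` becomes `lieAlgL (c₀ / μ)`.
Here `c₀ ≠ 0`, as otherwise `𝔉` would contain an idempotent, whose minimal polynomial has degree
at most 2; rescaling the basis by powers of `√|c₀ / μ|` turns `c₀ / μ` into `±1`.
-/

open Module Matrix

section LinearAlgebra

variable {K V : Type*} [Field K] [AddCommGroup V] [Module K V]

theorem aeval_ne_zero_of_natDegree_lt_minpoly {A : Type*} [Ring A] [Algebra K A] {x : A}
    {p : K[X]} (hp : p ≠ 0) (hlt : p.natDegree < (minpoly K x).natDegree) : aeval x p ≠ 0 :=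
  fun h => hlt.not_ge (natDegree_le_natDegree (minpoly.degree_le_of_ne_zero K x hp h))

theorem LinearIndependent.exists_eq_sum_fin_four {b : Fin 4 → V} (hb : LinearIndependent K b)
    (hV : finrank K V = 4) (x : V) :
    ∃ d : Fin 4 → K, x = d 0 • b 0 + d 1 • b 1 + d 2 • b 2 + d 3 • b 3 := by
  have hx : x ∈ Submodule.span K (Set.range b) := by
    rw [hb.span_eq_top_of_card_eq_finrank (by simp [hV])]; trivial
  obtain ⟨d, hd⟩ := (Submodule.mem_span_range_iff_exists_fun K).1 hx
  exact ⟨d, by rw [← hd, Fin.sum_univ_four]⟩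

theorem LinearIndependent.pair_of_apply (f : V →ₗ[K] K) {x y : V} (hx : f x ≠ 0) (hy : y ≠ 0)
    (hfy : f y = 0) : LinearIndependent K ![x, y] := by
  refine LinearIndependent.pair_iff.2 fun s t hst => ?_
  have hs : s = 0 := by simpa [hfy, hx] using congrArg f hst
  exact ⟨hs, by simpa [hs, hy] using hst⟩

theorem Submodule.eq_span_pair_of_finrank_eq_two {S : Submodule K V} [FiniteDimensional K S]
    (hS : finrank K S = 2) {x y : S} (hxy : LinearIndependent K ![x, y]) :
    S = span K {(x : V), (y : V)} := by
  have htop : span K {x, y} = ⊤ := by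
    rw [← Matrix.range_cons_cons_empty]
    exact hxy.span_eq_top_of_card_eq_finrank (by simp [hS])
  have h := congrArg (Submodule.map S.subtype) htop
  rw [Submodule.map_span, Set.image_pair, Submodule.map_subtype_top] at h
  exact h.symm

theorem linearIndependent_chain {P T : End K V} {e x : V} (hPT : Commute P T)
    (hPe : P e ≠ 0) (hPx : P x = 0) (hT3 : T (T (T x)) = 0) (hT2 : T (T x) ≠ 0) :
    LinearIndependent K ![T (T x), e, T x, x] := by
  have hPTx : P (T x) = 0 := by rw [← End.mul_apply, hPT.eq, End.mul_apply, hPx, map_zero]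
  have hPTTx : P (T (T x)) = 0 := by rw [← End.mul_apply, hPT.eq, End.mul_apply, hPTx, map_zero]
  rw [Fintype.linearIndependent_iff]
  intro c hc
  simp only [Fin.sum_univ_four, Matrix.cons_val] at hc
  have h1 : c 1 = 0 := by simpa [hPx, hPTx, hPTTx, hPe] using congrArg P hc
  have h3 : c 3 = 0 := by simpa [hT3, h1, hT2] using congrArg (fun u => T (T u)) hc
  have h2 : c 2 = 0 := by simpa [hT3, h1, h3, hT2] using congrArg T hc
  have h0 : c 0 = 0 := by simpa [h1, h2, h3, hT2] using hc
  intro i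
  fin_cases i <;> assumption

end LinearAlgebra

section NormalForm

variable {K V : Type*} [Field K] [AddCommGroup V] [Module K V] {Y Z : End K V} {μ : K}

theorem apply_pow_four_of_minpoly (hY : minpoly K Y = X ^ 3 * (X - C μ)) (u : V) :
    Y (Y (Y (Y u))) = μ • Y (Y (Y u)) := by
  have h := congrArg (· u) (minpoly.aeval K Y)
  simp only [hY, map_mul, map_sub, aeval_X, aeval_C, End.mul_apply, pow_succ, pow_zero, one_mul,
    LinearMap.sub_apply, Module.algebraMap_end_apply, map_smul, LinearMap.zero_apply] at h
  exact sub_eq_zero.1 h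

theorem exists_eigenvector_of_minpoly (hY : minpoly K Y = X ^ 3 * (X - C μ)) :
    ∃ v, v ≠ 0 ∧ Y v = μ • v := by
  have h := aeval_ne_zero_of_natDegree_lt_minpoly (x := Y) (p := X ^ 3) (pow_ne_zero 3 X_ne_zero)
    (by rw [hY]; simp [natDegree_mul, X_sub_C_ne_zero])
  obtain ⟨u, hu⟩ := DFunLike.ne_iff.1 h
  exact ⟨Y (Y (Y u)), by simpa [pow_succ] using hu, apply_pow_four_of_minpoly hY u⟩

theorem exists_chain_of_minpoly (hY : minpoly K Y = X ^ 3 * (X - C μ)) :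
    ∃ g, Y (Y (Y g)) = 0 ∧ Y (Y g) ≠ 0 := by
  have h := aeval_ne_zero_of_natDegree_lt_minpoly (x := Y) (p := X ^ 2 * (X - C μ))
    (mul_ne_zero (pow_ne_zero 2 X_ne_zero) (X_sub_C_ne_zero μ))
    (by rw [hY]; simp [natDegree_mul, X_sub_C_ne_zero])
  obtain ⟨u, hu⟩ := DFunLike.ne_iff.1 h
  refine ⟨Y u - μ • u, ?_, by simpa [pow_succ] using hu⟩
  simp [apply_pow_four_of_minpoly hY u]

theorem apply_pow_three_of_minpoly (hZ : minpoly K Z = X ^ 3) (u : V) : Z (Z (Z u)) = 0 := by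
  simpa [hZ, pow_succ] using congrArg (· u) (minpoly.aeval K Z)

theorem exists_apply_apply_ne_zero_of_minpoly (hZ : minpoly K Z = X ^ 3) :
    ∃ u, Z (Z u) ≠ 0 := by
  have h := aeval_ne_zero_of_natDegree_lt_minpoly (x := Z) (p := X ^ 2) (pow_ne_zero 2 X_ne_zero)
    (by rw [hZ]; simp)
  obtain ⟨u, hu⟩ := DFunLike.ne_iff.1 h
  exact ⟨u, by simpa [pow_succ] using hu⟩

theorem exists_cube_apply_eq_smul (hV : finrank K V = 4) (hY : minpoly K Y = X ^ 3 * (X - C μ))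
    (hμ : μ ≠ 0) {v : V} (hv : v ≠ 0) (hYv : Y v = μ • v) (u : V) :
    ∃ a : K, Y (Y (Y u)) = a • v := by
  obtain ⟨g, hg3, hg2⟩ := exists_chain_of_minpoly hY
  have hYYYv : Y (Y (Y v)) = μ ^ 3 • v := by simp [hYv, smul_smul, pow_succ]
  have hli := linearIndependent_chain (P := Y ^ 3) (e := v) ((Commute.refl Y).pow_left 3)
    (by simp [pow_succ, hYYYv, hμ, hv]) (by simp [pow_succ, hg3]) hg3 hg2
  obtain ⟨d, rfl⟩ := hli.exists_eq_sum_fin_four hV u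
  exact ⟨d 1 * μ ^ 3, by simp [hg3, hYYYv, smul_smul]⟩

theorem apply_eigenvector_eq_zero (hV : finrank K V = 4) (hYZ : Commute Y Z)
    (hY : minpoly K Y = X ^ 3 * (X - C μ)) (hμ : μ ≠ 0) (hZ : minpoly K Z = X ^ 3) {v : V}
    (hv : v ≠ 0) (hYv : Y v = μ • v) : Z v = 0 := by
  have hYZ' (x : V) : Y (Z x) = Z (Y x) := congrArg (· x) hYZ.eq
  obtain ⟨a, ha⟩ := exists_cube_apply_eq_smul hV hY hμ hv hYv (Z v)
  have hZv : Z v = (a / μ ^ 3) • v := by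
    simp only [hYZ', hYv, map_smul, smul_smul] at ha
    rw [div_eq_inv_mul, ← smul_smul, ← ha, ← pow_three', inv_smul_smul₀ (pow_ne_zero 3 hμ)]
  have h3 := apply_pow_three_of_minpoly hZ v
  simp only [hZv, map_smul, smul_smul, smul_eq_zero, hv, or_false] at h3
  rw [hZv, show a / μ ^ 3 = 0 by simpa [mul_self_eq_zero] using h3, zero_smul]

theorem exists_cube_apply_eq_zero_and_apply_apply_ne_zero (hV : finrank K V = 4)
    (hY : minpoly K Y = X ^ 3 * (X - C μ)) (hμ : μ ≠ 0) (hZ : minpoly K Z = X ^ 3) {v : V}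
    (hv : v ≠ 0) (hYv : Y v = μ • v) (hZv : Z v = 0) :
    ∃ w, Y (Y (Y w)) = 0 ∧ Z (Z w) ≠ 0 := by
  obtain ⟨u, hu⟩ := exists_apply_apply_ne_zero_of_minpoly hZ
  obtain ⟨a, ha⟩ := exists_cube_apply_eq_smul hV hY hμ hv hYv u
  refine ⟨u - (a / μ ^ 3) • v, ?_, by simpa [hZv] using hu⟩
  simp only [map_sub, map_smul, ha, hYv, smul_smul]
  rw [show a / μ ^ 3 * μ * μ * μ = a by field_simp, sub_self]

theorem exists_linearIndependent_apply_eq (hV : finrank K V = 4) (hYZ : Commute Y Z)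
    (hY : minpoly K Y = X ^ 3 * (X - C μ)) (hμ : μ ≠ 0) (hZ : minpoly K Z = X ^ 3) :
    ∃ (v w : V) (c₀ c₁ : K), LinearIndependent K ![Z (Z w), v, Z w, w] ∧
      Y v = μ • v ∧ Z v = 0 ∧ Y w = c₀ • Z (Z w) + c₁ • Z w := by
  have hYZ' (x : V) : Y (Z x) = Z (Y x) := congrArg (· x) hYZ.eq
  obtain ⟨v, hv, hYv⟩ := exists_eigenvector_of_minpoly hY
  have hZv := apply_eigenvector_eq_zero hV hYZ hY hμ hZ hv hYv
  obtain ⟨w, hw3, hw2⟩ :=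
    exists_cube_apply_eq_zero_and_apply_apply_ne_zero hV hY hμ hZ hv hYv hZv
  have hZ3 := apply_pow_three_of_minpoly hZ w
  have hli := linearIndependent_chain (P := Y ^ 3) (e := v) (hYZ.pow_left 3)
    (by simp [pow_succ, hYv, hμ, hv]) (by simp [pow_succ, hw3]) hZ3 hw2
  obtain ⟨d, hYw⟩ := hli.exists_eq_sum_fin_four hV (Y w)
  simp only [Matrix.cons_val] at hYw
  have hd1 : d 1 = 0 := by
    simpa [hYZ', hw3, hYv, smul_smul, hμ, hv] using congrArg (fun x => Y (Y (Y x))) hYw.symm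
  have hd3 : d 3 = 0 := by
    have hYZZw : Y (Z (Z w)) = d 3 • Z (Z w) := by simp [hYZ', hYw, hZv, hZ3]
    have h : Y (Y (Y (Z (Z w)))) = 0 := by simp [hYZ', hw3]
    simp only [hYZZw, map_smul, smul_smul] at h
    simpa [hw2] using h
  exact ⟨v, w, d 0, d 2, hli, hYv, hZv, by simpa [hd1, hd3] using hYw⟩

theorem toMatrix_eq_of_apply_eq {v w : V} {c₀ c₁ : K} (b : Basis (Fin 4) K V)
    (hb : ⇑b = ![Z (Z w), v, Z w, w]) (hYZ : Commute Y Z) (hYv : Y v = μ • v) (hZv : Z v = 0)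
    (hZ3 : Z (Z (Z w)) = 0) (hYw : Y w = c₀ • Z (Z w) + c₁ • Z w) :
    LinearMap.toMatrix b b Y = !![0, 0, c₁, c₀; 0, μ, 0, 0; 0, 0, 0, c₁; 0, 0, 0, 0] ∧
      LinearMap.toMatrix b b Z = !![0, 0, 1, 0; 0, 0, 0, 0; 0, 0, 0, 1; 0, 0, 0, 0] := by
  have hYZ' (x : V) : Y (Z x) = Z (Y x) := congrArg (· x) hYZ.eq
  constructor <;>
  · rw [← LinearEquiv.eq_symm_apply, LinearMap.toMatrix_symm]
    refine b.ext fun i => ?_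
    rw [Matrix.toLin_self]
    fin_cases i <;> simp [hb, Fin.sum_univ_four, hYZ', hYv, hZv, hZ3, hYw]

theorem exists_basis_toMatrix_eq (hV : finrank K V = 4) (hYZ : Commute Y Z)
    (hY : minpoly K Y = X ^ 3 * (X - C μ)) (hμ : μ ≠ 0) (hZ : minpoly K Z = X ^ 3) :
    ∃ (b : Basis (Fin 4) K V) (c₀ c₁ : K),
      LinearMap.toMatrix b b Y = !![0, 0, c₁, c₀; 0, μ, 0, 0; 0, 0, 0, c₁; 0, 0, 0, 0] ∧
      LinearMap.toMatrix b b Z = !![0, 0, 1, 0; 0, 0, 0, 0; 0, 0, 0, 1; 0, 0, 0, 0] := by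
  obtain ⟨v, w, c₀, c₁, hli, hYv, hZv, hYw⟩ := exists_linearIndependent_apply_eq hV hYZ hY hμ hZ
  let b := basisOfLinearIndependentOfCardEqFinrank hli (by simp [hV])
  exact ⟨b, c₀, c₁, toMatrix_eq_of_apply_eq b (coe_basisOfLinearIndependentOfCardEqFinrank _ _)
    hYZ hYv hZv (apply_pow_three_of_minpoly hZ w) hYw⟩

end NormalForm

section Conjugation

variable {ι R : Type*} [Fintype ι] [DecidableEq ι] [CommRing R]

theorem Matrix.exists_isUnit_conj_eq_toMatrix (b : Basis ι R (ι → R)) :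
    ∃ P : Matrix ι ι R, IsUnit P ∧
      ∀ M, P * M * P⁻¹ = LinearMap.toMatrix b b (Matrix.toLin' M) := by
  have hinv : (b.toMatrix (Pi.basisFun R ι))⁻¹ = (Pi.basisFun R ι).toMatrix b :=
    Matrix.inv_eq_right_inv (b.toMatrix_mul_toMatrix_flip _)
  refine ⟨b.toMatrix (Pi.basisFun R ι), IsUnit.of_mul_eq_one _ (b.toMatrix_mul_toMatrix_flip _),
    fun M => ?_⟩
  rw [hinv, ← basis_toMatrix_mul_linearMap_toMatrix_mul_basis_toMatrix b (Pi.basisFun R ι) b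
    (Pi.basisFun R ι), LinearMap.toMatrix_eq_toMatrix', LinearMap.toMatrix'_toLin']

theorem image_conj_mul (P Q : Matrix ι ι R) (S : Set (Matrix ι ι R)) :
    (fun x => Q * P * x * (Q * P)⁻¹) '' S =
      (fun x => Q * x * Q⁻¹) '' ((fun x => P * x * P⁻¹) '' S) := by
  simp only [Set.image_image, Matrix.mul_inv_rev, Matrix.mul_assoc]

theorem image_conj_span_pair (P A B : Matrix ι ι R) :
    (fun x => P * x * P⁻¹) '' (Submodule.span R {A, B} : Set (Matrix ι ι R)) =
      {M | ∃ a b : R, M = a • (P * A * P⁻¹) + b • (P * B * P⁻¹)} := by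
  ext M
  simp only [Set.mem_image, SetLike.mem_coe, Submodule.mem_span_pair, Set.mem_ofPred_eq]
  constructor
  · rintro ⟨_, ⟨a, b, rfl⟩, rfl⟩
    exact ⟨a, b, by simp [Matrix.mul_add, Matrix.add_mul]⟩
  · rintro ⟨a, b, rfl⟩
    exact ⟨a • A + b • B, ⟨a, b, rfl⟩, by simp [Matrix.mul_add, Matrix.add_mul]⟩

end Conjugation

theorem Matrix.exists_conj_eq_of_minpoly {K : Type*} [Field K] {y z : Matrix (Fin 4) (Fin 4) K}
    {μ : K} (hyz : Commute y z) (hy : minpoly K y = X ^ 3 * (X - C μ)) (hμ : μ ≠ 0)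
    (hz : minpoly K z = X ^ 3) :
    ∃ P : Matrix (Fin 4) (Fin 4) K, IsUnit P ∧ ∃ c₀ c₁ : K,
      P * y * P⁻¹ = !![0, 0, c₁, c₀; 0, μ, 0, 0; 0, 0, 0, c₁; 0, 0, 0, 0] ∧
      P * z * P⁻¹ = !![0, 0, 1, 0; 0, 0, 0, 0; 0, 0, 0, 1; 0, 0, 0, 0] := by
  obtain ⟨b, c₀, c₁, hby, hbz⟩ := exists_basis_toMatrix_eq (by simp)
    (hyz.map Matrix.toLinAlgEquiv') ((Matrix.minpoly_toLin' y).trans hy) hμ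
    ((Matrix.minpoly_toLin' z).trans hz)
  obtain ⟨P, hP, hconj⟩ := Matrix.exists_isUnit_conj_eq_toMatrix b
  exact ⟨P, hP, c₀, c₁, by rw [hconj, ← hby]; rfl, by rw [hconj, ← hbz]; rfl⟩

def lieAlgL (κ : ℝ) : Set (Matrix (Fin 4) (Fin 4) ℝ) :=
  {M | ∃ a b : ℝ, M = !![0, 0, b, κ * a; 0, a, 0, 0; 0, 0, 0, b; 0, 0, 0, 0]}

theorem lieAlgL_neg_one : lieAlgL (-1) = LieAlgL' := by
  simp [lieAlgL, LieAlgL']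

theorem lieAlgL_one : lieAlgL 1 = LieAlgL'neg := by
  simp [lieAlgL, LieAlgL'neg]

theorem setOf_smul_add_smul_eq_lieAlgL {μ : ℝ} (hμ : μ ≠ 0) (c₀ c₁ : ℝ) :
    {M | ∃ a b : ℝ, M = a • !![0, 0, c₁, c₀; 0, μ, 0, 0; 0, 0, 0, c₁; 0, 0, 0, 0] +
      b • !![0, 0, 1, 0; 0, 0, 0, 0; 0, 0, 0, 1; 0, 0, 0, 0]} = lieAlgL (c₀ / μ) := by
  ext M
  simp only [lieAlgL, Set.mem_ofPred_eq]
  constructor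
  · rintro ⟨a, b, rfl⟩
    refine ⟨a * μ, a * c₁ + b, ?_⟩
    ext i j; fin_cases i <;> fin_cases j <;> simp [field]
  · rintro ⟨a, b, rfl⟩
    refine ⟨a / μ, b - a / μ * c₁, ?_⟩
    ext i j; fin_cases i <;> fin_cases j <;> simp [field]

theorem image_conj_diagonal_lieAlgL (κ : ℝ) {s : ℝ} (hs : s ≠ 0) :
    (fun x => diagonal ![1, 1, s, s ^ 2] * x * (diagonal ![1, 1, s, s ^ 2])⁻¹) '' lieAlgL κ =
      lieAlgL (κ / s ^ 2) := by
  have hinv : (diagonal ![1, 1, s, s ^ 2])⁻¹ = diagonal ![1, 1, s⁻¹, (s ^ 2)⁻¹] := by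
    refine Matrix.inv_eq_right_inv ?_
    rw [diagonal_mul_diagonal]
    ext i j; fin_cases i <;> fin_cases j <;> simp [hs]
  ext M
  simp only [hinv, lieAlgL, Set.mem_image, Set.mem_ofPred_eq]
  constructor
  · rintro ⟨_, ⟨a, b, rfl⟩, rfl⟩
    refine ⟨a, b / s, ?_⟩
    ext i j; fin_cases i <;> fin_cases j <;> simp [diagonal_mul, mul_diagonal, field]
  · rintro ⟨a, b, rfl⟩
    refine ⟨_, ⟨a, b * s, rfl⟩, ?_⟩
    ext i j; fin_cases i <;> fin_cases j <;> simp [diagonal_mul, mul_diagonal, field]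

theorem exists_conj_lieAlgL_eq {κ : ℝ} (hκ : κ ≠ 0) :
    ∃ P : Matrix (Fin 4) (Fin 4) ℝ, IsUnit P ∧
      ((fun x => P * x * P⁻¹) '' lieAlgL κ = LieAlgL' ∨
        (fun x => P * x * P⁻¹) '' lieAlgL κ = LieAlgL'neg) := by
  have hs : √|κ| ≠ 0 := Real.sqrt_ne_zero'.2 (abs_pos.2 hκ)
  refine ⟨diagonal ![1, 1, √|κ|, √|κ| ^ 2], ?_, ?_⟩
  · refine isUnit_diagonal.2 (Pi.isUnit_iff.2 fun i => ?_)
    fin_cases i <;> simp [hs, hκ]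
  · rw [image_conj_diagonal_lieAlgL κ hs, Real.sq_sqrt (abs_nonneg κ)]
    rcases hκ.lt_or_gt with h | h
    · left
      rw [abs_of_neg h, div_neg, div_self hκ, lieAlgL_neg_one]
    · right
      rw [abs_of_pos h, div_self hκ, lieAlgL_one]

theorem ne_zero_of_image_conj_eq_lieAlgL {S : Set (Matrix (Fin 4) (Fin 4) ℝ)}
    (hS : ∀ x ∈ S, x ≠ 0 → 2 < (minpoly ℝ x).natDegree) {P : Matrix (Fin 4) (Fin 4) ℝ}
    (hP : IsUnit P) {κ : ℝ} (h : (fun x => P * x * P⁻¹) '' S = lieAlgL κ) : κ ≠ 0 := by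
  rintro rfl
  let E : Matrix (Fin 4) (Fin 4) ℝ := !![0, 0, 0, 0; 0, 1, 0, 0; 0, 0, 0, 0; 0, 0, 0, 0]
  obtain ⟨x, hxS, hx⟩ : E ∈ (fun x => P * x * P⁻¹) '' S :=
    h ▸ ⟨1, 0, by ext i j; fin_cases i <;> fin_cases j <;> simp [E]⟩
  have hdet := (Matrix.isUnit_iff_isUnit_det P).1 hP
  have hxE : x = P⁻¹ * E * P := by
    rw [← hx, ← Matrix.mul_assoc, ← Matrix.mul_assoc, nonsing_inv_mul _ hdet, Matrix.one_mul,
      nonsing_inv_mul_cancel_right _ _ hdet]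
  have hx0 : x ≠ 0 := by
    rintro rfl
    have h11 : E 1 1 = 0 := by simp [← hx]
    simp [E] at h11
  have hEE : E * E = E := by ext i j; fin_cases i <;> fin_cases j <;> simp [E]
  have hxx : x * x = x := by
    rw [hxE]
    simp only [Matrix.mul_assoc, mul_nonsing_inv_cancel_left _ _ hdet]
    rw [← Matrix.mul_assoc E, hEE]
  refine aeval_ne_zero_of_natDegree_lt_minpoly (x := x) (p := (X * (X - C 1) : ℝ[X]))
    (mul_ne_zero X_ne_zero (X_sub_C_ne_zero 1)) ?_ (by simp [mul_sub, hxx])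
  rw [natDegree_mul X_ne_zero (X_sub_C_ne_zero 1), natDegree_X, natDegree_X_sub_C]
  exact hS x hxS hx0

theorem stmt_12_general (𝔉 : Submodule ℝ (Matrix (Fin 4) (Fin 4) ℝ))
    (hdim : Module.finrank ℝ 𝔉 = 2)
    (habel : ∀ x ∈ 𝔉, ∀ y ∈ 𝔉, x * y = y * x)
    (f : 𝔉 →ₗ[ℝ] ℝ)
    (n : 𝔉 → ℕ)
    (hn23 : ∀ x : 𝔉, x ≠ 0 → n x = 2 ∨ n x = 3)
    (hmin : ∀ x : 𝔉, x ≠ 0 →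
      minpoly ℝ (x : Matrix (Fin 4) (Fin 4) ℝ) = X ^ (n x) * (X - C (f x)))
    (hker : ∀ x : 𝔉, x ≠ 0 → f x = 0 → n x = 2)
    (h3 : ∃ x : 𝔉, x ≠ 0 ∧ n x = 3) :
    ∃ P : Matrix (Fin 4) (Fin 4) ℝ, IsUnit P ∧
      ((fun x => P * x * P⁻¹) '' (𝔉 : Set (Matrix (Fin 4) (Fin 4) ℝ)) = LieAlgL' ∨
       (fun x => P * x * P⁻¹) '' (𝔉 : Set (Matrix (Fin 4) (Fin 4) ℝ)) = LieAlgL'neg) := by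
  obtain ⟨y, hy0, hny⟩ := h3
  have hfy : f y ≠ 0 := fun h => by simp [hker y hy0 h] at hny
  obtain ⟨z, hfz, hz0⟩ :=
    (Submodule.ne_bot_iff _).1 (LinearMap.ker_ne_bot_of_finrank_lt (f := f) (by simp [hdim]))
  rw [LinearMap.mem_ker] at hfz
  have h𝔉 := congrArg SetLike.coe <|
    Submodule.eq_span_pair_of_finrank_eq_two hdim (LinearIndependent.pair_of_apply f hfy hz0 hfz)
  obtain ⟨P, hP, c₀, c₁, hPy, hPz⟩ := Matrix.exists_conj_eq_of_minpoly (habel _ y.2 _ z.2)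
    (by rw [hmin y hy0, hny]) hfy (by rw [hmin z hz0, hker z hz0 hfz, hfz]; simp [← pow_succ])
  have hconj : (fun x => P * x * P⁻¹) '' 𝔉 = lieAlgL (c₀ / f y) := by
    rw [h𝔉, image_conj_span_pair, hPy, hPz, setOf_smul_add_smul_eq_lieAlgL hfy]
  have hdeg : ∀ x ∈ 𝔉, x ≠ 0 → 2 < (minpoly ℝ x).natDegree := fun x hx hx0 => by
    have hx0' : (⟨x, hx⟩ : 𝔉) ≠ 0 := fun h => hx0 (congrArg Subtype.val h)
    rw [hmin _ hx0', natDegree_mul (by simp) (X_sub_C_ne_zero _)]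
    rcases hn23 _ hx0' with h | h <;> simp [h]
  obtain ⟨Q, hQ, hQL⟩ := exists_conj_lieAlgL_eq (ne_zero_of_image_conj_eq_lieAlgL hdeg hP hconj)
  exact ⟨Q * P, hQ.mul hP, by rwa [image_conj_mul, hconj]⟩

/-- Lemma 3.2: a 2-dimensional abelian subalgebra `𝔉 ⊆ 𝔤𝔩₄(ℝ)` whose minimal polynomial
map has the form `X^{n(x)}(X − f(x))` with `n(x) ∈ {2,3}`, `n = 2` on `ker f`, and `n = 3`
somewhere, is conjugate to `𝔏'` or to `𝔏'₋`. -/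
theorem stmt_12 (𝔉 : Submodule ℝ (Matrix (Fin 4) (Fin 4) ℝ))
    (hdim : Module.finrank ℝ 𝔉 = 2)
    (habel : ∀ x ∈ 𝔉, ∀ y ∈ 𝔉, x * y = y * x)
    (f : 𝔉 →ₗ[ℝ] ℝ) (hf : f ≠ 0)
    (n : 𝔉 → ℕ)
    (hn23 : ∀ x : 𝔉, x ≠ 0 → n x = 2 ∨ n x = 3)
    (hmin : ∀ x : 𝔉, x ≠ 0 →
      minpoly ℝ (x : Matrix (Fin 4) (Fin 4) ℝ) = X ^ (n x) * (X - C (f x)))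
    (hker : ∀ x : 𝔉, x ≠ 0 → f x = 0 → n x = 2)
    (h3 : ∃ x : 𝔉, x ≠ 0 ∧ n x = 3) :
    ∃ P : Matrix (Fin 4) (Fin 4) ℝ, IsUnit P ∧
      ((fun x => P * x * P⁻¹) '' (𝔉 : Set (Matrix (Fin 4) (Fin 4) ℝ)) = LieAlgL' ∨
       (fun x => P * x * P⁻¹) '' (𝔉 : Set (Matrix (Fin 4) (Fin 4) ℝ)) = LieAlgL'neg) :=
  stmt_12_general 𝔉 hdim habel f n hn23 hmin hker h3
end

section
/- For every real t ≠ 0 and all (x₁,x₂) ∈ ℝ², we have V_t · X'(x₁,x₂) · V_t⁻¹ = Y, where V_t is the 4×4 real matrix with rows (1/t², 1/t², 0, −1/t²), (0, 1/t, 0, −1/t), (0, 0, 1/t, 0), (0, 0, 0, 1), X'(x₁,x₂) is the matrix with rows (0,0,x₂,−x₁), (0,x₁,0,0), (0,0,0,x₂), (0,0,0,0), and Y is the matrix with rows (0, x₁/t, x₂/t, 0), (0, x₁, 0, x₁/t), (0, 0, 0, x₂/t), (0, 0, 0, 0). In particular V_t conjugates the Lie algebra 𝔏' = {X'(a,b)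 : (a,b) ∈ ℝ²} onto the Lie algebra 𝔏_t. -/
/-! `V_t` is upper triangular with diagonal `1/t², 1/t, 1/t, 1`, hence invertible for `t ≠ 0`,
and `V_t X'(x₁,x₂) = Y V_t` is checked entry by entry; multiplying on the right by `V_t⁻¹`
gives the conjugation. -/

namespace LieConjugation

open Matrix

noncomputable def V (t : ℝ) : Matrix (Fin 4) (Fin 4) ℝ :=
  !![1 / t ^ 2, 1 / t ^ 2, 0, -(1 / t ^ 2);
     0, 1 / t, 0, -(1 / t);
     0, 0, 1 / t, 0;
     0, 0, 0, 1]

def X' (a b : ℝ) : Matrix (Fin 4) (Fin 4) ℝ :=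
  !![0, 0, b, -a;
     0, a, 0, 0;
     0, 0, 0, b;
     0, 0, 0, 0]

/-- The element of `𝔏_t` with parameters `r = a / t`, `s = b / t`, written with `t r = a`. -/
noncomputable def Y (t a b : ℝ) : Matrix (Fin 4) (Fin 4) ℝ :=
  !![0, a / t, b / t, 0;
     0, a, 0, a / t;
     0, 0, 0, b / t;
     0, 0, 0, 0]

lemma V_isUpperTriangular (t : ℝ) : (V t).IsUpperTriangular := by
  intro i j hij
  fin_cases i <;> fin_cases j <;> first | rfl | exact absurd hij (by decide)

lemma det_V (t : ℝ) : (V t).det = (t ^ 4)⁻¹ := by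
  rw [det_of_isUpperTriangular (V_isUpperTriangular t), Fin.prod_univ_four]
  simp only [V, one_div, of_apply, cons_val', cons_val_zero, cons_val_fin_one, cons_val_one,
    cons_val, mul_one]
  ring

lemma isUnit_det_V {t : ℝ} (ht : t ≠ 0) : IsUnit (V t).det := by
  rw [det_V]
  exact (inv_ne_zero (pow_ne_zero 4 ht)).isUnit

lemma V_mul_X' {t : ℝ} (ht : t ≠ 0) (a b : ℝ) : V t * X' a b = Y t a b * V t := by
  ext i j
  fin_cases i <;> fin_cases j <;>
    simp [V, X', Y, mul_apply, Fin.sum_univ_four] <;> field_simp; ring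

lemma V_mul_X'_mul_inv {t : ℝ} (ht : t ≠ 0) (a b : ℝ) :
    V t * X' a b * (V t)⁻¹ = Y t a b := by
  rw [V_mul_X' ht, mul_nonsing_inv_cancel_right _ _ (isUnit_det_V ht)]

end LieConjugation

/-- Equation (3.7): `V_t` conjugates the element `X'(x₁,x₂)` of `𝔏'` to the corresponding
element of `𝔏_t`; in particular `V_t` conjugates `𝔏'` onto `𝔏_t`. -/
theorem stmt_13 (t : ℝ) (ht : t ≠ 0) (x₁ x₂ : ℝ) :
    (!![1 / t ^ 2, 1 / t ^ 2, 0, -(1 / t ^ 2);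
        0, 1 / t, 0, -(1 / t);
        0, 0, 1 / t, 0;
        0, 0, 0, 1] : Matrix (Fin 4) (Fin 4) ℝ) *
      !![0, 0, x₂, -x₁;
         0, x₁, 0, 0;
         0, 0, 0, x₂;
         0, 0, 0, 0] *
      (!![1 / t ^ 2, 1 / t ^ 2, 0, -(1 / t ^ 2);
          0, 1 / t, 0, -(1 / t);
          0, 0, 1 / t, 0;
          0, 0, 0, 1] : Matrix (Fin 4) (Fin 4) ℝ)⁻¹ =
    !![0, x₁ / t, x₂ / t, 0;
       0, x₁, 0, x₁ / t;
       0, 0, 0, x₂ / t;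
       0, 0, 0, 0] :=
  LieConjugation.V_mul_X'_mul_inv ht x₁ x₂
end
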